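/- Let P be a strong Feller Markov kernel on a Polish space X and suppose there exists n ≥ 1 such that P^n(x,A) > 0 for every x ∈ X and every nonempty open set A ⊂ X. Then for every m > n and every pair of points x, y ∈ X, the probability measures P^m(x,·) and P^m(y,·) are equivalent (mutually absolutely continuous). -/
import Mathlib


open MeasureTheory ProbabilityTheory Filter
open scoped ENNReal

/-- A Markov kernel is *strong Feller* if it maps bounded measurable functions to
continuous functions. -/
def StrongFeller {X : Type*} [MeasurableSpace X] [TopologicalSpace X] (P : Kernel X X) : Prop :=
  ∀ f : X → ℝ, Measurable f → (∃ C, ∀ x, |f x| ≤ C) →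
    Continuous fun x => ∫ y, f y ∂(P x)

/-- `n`-step transition kernel: the `n`-fold composition of `P` with itself. -/
noncomputable def kpow {α : Type*} [MeasurableSpace α] (P : Kernel α α) : ℕ → Kernel α α
  | 0 => Kernel.id
  | n + 1 => P ∘ₖ kpow P n

instance kpow.instIsMarkovKernel {α : Type*} [MeasurableSpace α] (P : Kernel α α)
    [IsMarkovKernel P] (k : ℕ) : IsMarkovKernel (kpow P k) := by
  induction k with
  | zero => rw [kpow]; infer_instance
  | succ k ih => rw [kpow]; infer_instance

lemma kpow_add {α : Type*} [MeasurableSpace α] (P : Kernel α α) [IsMarkovKernel P] (a b : ℕ) :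
    kpow P (a + b) = kpow P b ∘ₖ kpow P a := by
  induction b with
  | zero => simp [kpow]
  | succ b ih =>
    show kpow P ((a + b) + 1) = _
    rw [kpow, ih, kpow, Kernel.comp_assoc]

lemma kpow_succ' {α : Type*} [MeasurableSpace α] (P : Kernel α α) [IsMarkovKernel P] (k : ℕ) :
    kpow P (k + 1) = kpow P k ∘ₖ P := by
  have h := kpow_add P 1 k
  rw [Nat.add_comm 1 k] at h
  rw [h]
  congr 1
  show P ∘ₖ Kernel.id = P
  simp

/-- For `k ≥ 1`, strong Feller implies `z ↦ P^k(z, A)` (as a real number) is continuous. -/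
lemma kpow_continuous_toReal {X : Type*} [TopologicalSpace X] [PolishSpace X]
    [MeasurableSpace X] [BorelSpace X] (P : Kernel X X) [IsMarkovKernel P] (hP : StrongFeller P)
    (k : ℕ) {A : Set X} (hA : MeasurableSet A) :
    Continuous fun z => (kpow P (k + 1) z A).toReal := by
  set f : X → ℝ := fun w => (kpow P k w A).toReal with hf
  have hfm : Measurable f := (Kernel.measurable_coe (kpow P k) hA).ennreal_toReal
  have hfb : ∃ C, ∀ w, |f w| ≤ C := by
    refine ⟨1, fun w => ?_⟩
    rw [abs_of_nonneg ENNReal.toReal_nonneg]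
    exact ENNReal.toReal_le_of_le_ofReal one_pos.le (by simpa using prob_le_one)
  have key : ∀ z, (∫ w, f w ∂(P z)) = (kpow P (k + 1) z A).toReal := by
    intro z
    rw [kpow_succ' P k, Kernel.comp_apply' _ _ _ hA]
    rw [hf]
    rw [integral_toReal ((Kernel.measurable_coe (kpow P k) hA).aemeasurable)]
    exact ae_of_all _ fun w => lt_of_le_of_lt prob_le_one ENNReal.one_lt_top
  have := hP f hfm hfb
  simpa only [funext key] using this

lemma kpow_ac_aux {X : Type*} [TopologicalSpace X] [PolishSpace X]
    [MeasurableSpace X] [BorelSpace X]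
    (P : Kernel X X) [IsMarkovKernel P] (hP : StrongFeller P)
    (n : ℕ)
    (hirr : ∀ x : X, ∀ A : Set X, IsOpen A → A.Nonempty → 0 < kpow P n x A)
    (m : ℕ) (hm : n < m) (x y : X) :
    kpow P m x ≪ kpow P m y := by
  refine Measure.AbsolutelyContinuous.mk fun A hA hA0 => ?_
  obtain ⟨k, rfl⟩ : ∃ k, m = n + (k + 1) := ⟨m - n - 1, by omega⟩
  have hdecomp : ∀ w : X, kpow P (n + (k + 1)) w A
      = ∫⁻ z, kpow P (k + 1) z A ∂(kpow P n w) := by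
    intro w
    rw [kpow_add P n (k + 1), Kernel.comp_apply' _ _ _ hA]
  -- the function z ↦ P^{k+1}(z,A) vanishes a.e. w.r.t. P^n(y, ·)
  have hmeas : Measurable fun z => kpow P (k + 1) z A := Kernel.measurable_coe _ hA
  have hae : ∀ᵐ z ∂(kpow P n y), kpow P (k + 1) z A = 0 := by
    have h0 : ∫⁻ z, kpow P (k + 1) z A ∂(kpow P n y) = 0 := by rw [← hdecomp]; exact hA0
    have := (lintegral_eq_zero_iff hmeas).mp h0
    filter_upwards [this] with z hz using hz
  -- the set where it is positive is open
  have hcont := kpow_continuous_toReal P hP k hA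
  set U : Set X := {z | 0 < (kpow P (k + 1) z A).toReal} with hU
  have hUopen : IsOpen U := isOpen_lt continuous_const hcont
  have hUempty : U = ∅ := by
    by_contra h
    have hUne : U.Nonempty := Set.nonempty_iff_ne_empty.mpr h
    have hpos := hirr y U hUopen hUne
    have : kpow P n y U = 0 := by
      refine measure_mono_null (fun z hz => ?_) (ae_iff.mp hae)
      intro hz0
      simp only [hU, Set.mem_setOf_eq, hz0, ENNReal.toReal_zero, lt_self_iff_false] at hz
    exact absurd this hpos.ne'
  -- hence P^{k+1}(z, A) = 0 for all z
  have hzero : ∀ z, kpow P (k + 1) z A = 0 := by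
    intro z
    have hne : kpow P (k + 1) z A ≠ ⊤ :=
      (lt_of_le_of_lt prob_le_one ENNReal.one_lt_top).ne
    have : ¬ 0 < (kpow P (k + 1) z A).toReal := by
      intro h
      have : z ∈ U := h
      simp [hUempty] at this
    have h0 : (kpow P (k + 1) z A).toReal = 0 :=
      le_antisymm (not_lt.mp this) ENNReal.toReal_nonneg
    exact (ENNReal.toReal_eq_zero_iff _).mp h0 |>.resolve_right hne
  rw [hdecomp x]
  simp [hzero]

/-- Let `P` be a strong Feller Markov kernel on a Polish space `X` such that for some `n ≥ 1`
one has `P^n(x,A) > 0` for every `x` and every nonempty open set `A`. Then for every `m > n`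
and all `x, y ∈ X`, the measures `P^m(x,·)` and `P^m(y,·)` are mutually absolutely
continuous. -/
theorem kernelPow_equivalent_of_strongFeller_irreducible
    {X : Type*} [TopologicalSpace X] [PolishSpace X] [MeasurableSpace X] [BorelSpace X]
    (P : Kernel X X) [IsMarkovKernel P] (hP : StrongFeller P)
    (n : ℕ) (hn : 1 ≤ n)
    (hirr : ∀ x : X, ∀ A : Set X, IsOpen A → A.Nonempty → 0 < kpow P n x A)
    (m : ℕ) (hm : n < m) (x y : X) :
    kpow P m x ≪ kpow P m y ∧ kpow P m y ≪ kpow P m x :=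
  ⟨kpow_ac_aux P hP n hirr m hm x y, kpow_ac_aux P hP n hirr m hm y x⟩
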